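/- arXiv:2503.21416 — 5 statements merged into one kernel-verified Lean document; each statement's English description precedes it below -/
import Mathlib

section
/- Let (V,⟨·,·⟩) be a finite-dimensional real inner product space and let 𝔥₁,…,𝔥ₛ be pairwise orthogonal nonzero subspaces of V whose orthogonal complement (of their span) in V is nonzero. On W = V × (𝔥₁ × ⋯ × 𝔥ₛ) define, for real numbers r₀,r₁,…,rₛ, the symmetric bilinear form h_r((x,u),(y,v)) = r₀⟨x,y⟩ + Σⱼ rⱼ⟨uⱼ,vⱼ⟩, and let Δ𝔥 = {(u₁+⋯+uₛ,(u₁,…,uₛ)) : uⱼ ∈ 𝔥ⱼ} ⊆ W. Then: (i) the restriction of h_r to Δ𝔥 is nondegenerate if and only if rⱼ ≠ −r₀ for all j = 1,…,s; (ii) h_r is positive definite on the h_r-orthogonal complement Δ𝔥^⊥ = {w ∈ W : h_r(w,d)=0 for all d ∈ Δ𝔥} if and only if r₀ > 0 and, for every j = 1,…,s, either rⱼ > 0 or rⱼ < −r₀. -/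
open scoped RealInnerProductSpace

/-- The bilinear form `h_r` on `W = V × (𝔥₁ × ⋯ × 𝔥ₛ)`:
`h_r((x,u),(y,v)) = r₀⟨x,y⟩ + ∑ⱼ rⱼ⟨uⱼ,vⱼ⟩`. -/
noncomputable def hrForm {V : Type*} [NormedAddCommGroup V] [InnerProductSpace ℝ V]
    {s : ℕ} (𝔥 : Fin s → Submodule ℝ V) (r₀ : ℝ) (r : Fin s → ℝ)
    (p q : V × (∀ j, 𝔥 j)) : ℝ :=
  r₀ * ⟪p.1, q.1⟫ + ∑ j, r j * ⟪(p.2 j : V), (q.2 j : V)⟫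

/-- The diagonal `Δ𝔥 = {(u₁+⋯+uₛ, (u₁,…,uₛ)) : uⱼ ∈ 𝔥ⱼ} ⊆ W`. -/
def diagH {V : Type*} [NormedAddCommGroup V] [InnerProductSpace ℝ V]
    {s : ℕ} (𝔥 : Fin s → Submodule ℝ V) : Set (V × (∀ j, 𝔥 j)) :=
  {w | ∃ u : ∀ j, 𝔥 j, w = (∑ j, (u j : V), u)}

/-- The `h_r`-orthogonal complement `Δ𝔥^⊥ = {w ∈ W : h_r(w,d) = 0 for all d ∈ Δ𝔥}`. -/
noncomputable def diagHPerp {V : Type*} [NormedAddCommGroup V] [InnerProductSpace ℝ V]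
    {s : ℕ} (𝔥 : Fin s → Submodule ℝ V) (r₀ : ℝ) (r : Fin s → ℝ) : Set (V × (∀ j, 𝔥 j)) :=
  {w | ∀ d ∈ diagH 𝔥, hrForm 𝔥 r₀ r w d = 0}

section helpers
variable {V : Type*} [NormedAddCommGroup V] [InnerProductSpace ℝ V]
  {s : ℕ} {𝔥 : Fin s → Submodule ℝ V} {r₀ : ℝ} {r : Fin s → ℝ}

lemma hr_apply_diag (w : V × (∀ j, 𝔥 j)) (v : ∀ j, 𝔥 j) :
    hrForm 𝔥 r₀ r w (∑ j, (v j : V), v)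
      = ∑ j, (r₀ * ⟪w.1, (v j : V)⟫ + r j * ⟪(w.2 j : V), (v j : V)⟫) := by
  simp [hrForm, inner_sum, Finset.mul_sum, Finset.sum_add_distrib]

lemma hr_diag (h_orth : ∀ i j, i ≠ j → ∀ u ∈ 𝔥 i, ∀ v ∈ 𝔥 j, ⟪u, v⟫ = 0)
    (u v : ∀ j, 𝔥 j) :
    hrForm 𝔥 r₀ r (∑ j, (u j : V), u) (∑ j, (v j : V), v)
      = ∑ j, (r₀ + r j) * ⟪(u j : V), (v j : V)⟫ := by
  rw [hr_apply_diag]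
  refine Finset.sum_congr rfl fun j _ => ?_
  have : ⟪(∑ k, ((u k : V)) : V), (v j : V)⟫ = ⟪(u j : V), (v j : V)⟫ := by
    rw [sum_inner, Finset.sum_eq_single j]
    · intro k _ hk
      exact h_orth k j hk _ (u k).2 _ (v j).2
    · simp
  rw [this]; ring

lemma mem_perp_iff {w : V × (∀ j, 𝔥 j)} :
    w ∈ diagHPerp 𝔥 r₀ r ↔
      ∀ j, ∀ v ∈ 𝔥 j, r₀ * ⟪w.1, v⟫ + r j * ⟪(w.2 j : V), v⟫ = 0 := by
  constructor
  · intro hw j v hv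
    have := hw _ ⟨Pi.single j ⟨v, hv⟩, rfl⟩
    rw [hr_apply_diag, Finset.sum_eq_single j] at this
    · simpa using this
    · intro k _ hk; simp [Pi.single_eq_of_ne hk]
    · simp
  · intro h d hd
    obtain ⟨v, rfl⟩ := hd
    rw [hr_apply_diag]
    exact Finset.sum_eq_zero fun j _ => h j (v j) (v j).2

lemma inner_self_pos' {x : V} (hx : x ≠ 0) : 0 < ⟪x, x⟫ :=
  lt_of_le_of_ne real_inner_self_nonneg
    (fun h => hx (inner_self_eq_zero.1 h.symm))

end helpers

/-- **Nondegeneracy on the diagonal, and positive definiteness on its complement.**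
For pairwise orthogonal nonzero subspaces `𝔥ⱼ` of a finite-dimensional real inner product
space `V` whose span has nonzero orthogonal complement:
(i) `h_r` restricted to `Δ𝔥` is nondegenerate iff `rⱼ ≠ −r₀` for all `j`;
(ii) `h_r` is positive definite on `Δ𝔥^⊥` iff `r₀ > 0` and, for each `j`,
`rⱼ > 0` or `rⱼ < −r₀`. -/
theorem hrForm_nondegenerate_and_posDef
    {V : Type*} [NormedAddCommGroup V] [InnerProductSpace ℝ V] [FiniteDimensional ℝ V]
    {s : ℕ} (𝔥 : Fin s → Submodule ℝ V)
    (h_ne : ∀ j, 𝔥 j ≠ ⊥)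
    (h_orth : ∀ i j, i ≠ j → ∀ u ∈ 𝔥 i, ∀ v ∈ 𝔥 j, ⟪u, v⟫ = 0)
    (h_comp : (⨆ j, 𝔥 j)ᗮ ≠ ⊥)
    (r₀ : ℝ) (r : Fin s → ℝ) :
    ((∀ d ∈ diagH 𝔥, (∀ d' ∈ diagH 𝔥, hrForm 𝔥 r₀ r d d' = 0) → d = 0)
        ↔ ∀ j, r j ≠ -r₀) ∧
    ((∀ w ∈ diagHPerp 𝔥 r₀ r, w ≠ 0 → 0 < hrForm 𝔥 r₀ r w w)
        ↔ (0 < r₀ ∧ ∀ j, 0 < r j ∨ r j < -r₀)) := by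
  constructor
  · -- Part (i)
    constructor
    · intro hnd j hj
      obtain ⟨e, he, hne⟩ := (Submodule.ne_bot_iff _).1 (h_ne j)
      set u : ∀ k, 𝔥 k := Pi.single j ⟨e, he⟩ with hu
      have hd := hnd (∑ k, (u k : V), u) ⟨u, rfl⟩ ?_
      · apply hne
        have h2 : u j = (0 : 𝔥 j) := congrFun (congrArg Prod.snd hd) j
        have h3 : u j = ⟨e, he⟩ := by simp [hu]
        rw [h3] at h2
        simpa [Subtype.ext_iff] using h2
      · intro d' hd'
        obtain ⟨v, rfl⟩ := hd'
        rw [hr_diag h_orth]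
        refine Finset.sum_eq_zero fun k _ => ?_
        rcases eq_or_ne k j with rfl | hk
        · simp [hj]
        · simp [hu, Pi.single_eq_of_ne hk]
    · intro hr d hd h0
      obtain ⟨v, rfl⟩ := hd
      have hv : v = 0 := by
        funext j
        have h1 := h0 (∑ k, ((Pi.single j (v j) : ∀ k, 𝔥 k) k : V), Pi.single j (v j))
          ⟨_, rfl⟩
        rw [hr_diag h_orth, Finset.sum_eq_single j] at h1
        · rw [Pi.single_eq_same] at h1
          have hr' : r₀ + r j ≠ 0 := fun h => hr j (by linarith)
          have : ⟪(v j : V), (v j : V)⟫ = 0 := by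
            rcases mul_eq_zero.1 h1 with h | h
            · exact absurd h hr'
            · exact h
          have : (v j : V) = 0 := by rwa [inner_self_eq_zero] at this
          exact Subtype.ext this
        · intro k _ hk; simp [Pi.single_eq_of_ne hk]
        · simp
      subst hv
      simp
  · -- Part (ii)
    constructor
    · intro hpd
      obtain ⟨z, hz, hzne⟩ := (Submodule.ne_bot_iff _).1 h_comp
      have hzorth : ∀ j, ∀ v ∈ 𝔥 j, ⟪z, v⟫ = 0 := by
        intro j v hv
        rw [real_inner_comm]
        exact (Submodule.mem_orthogonal _ z).1 hz v (Submodule.mem_iSup_of_mem j hv)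
      have hr₀ : 0 < r₀ := by
        have hmem : (z, (0 : ∀ j, 𝔥 j)) ∈ diagHPerp 𝔥 r₀ r := by
          rw [mem_perp_iff]
          intro j v hv
          simp [hzorth j v hv]
        have hne0 : (z, (0 : ∀ j, 𝔥 j)) ≠ 0 := by
          intro h
          exact hzne (congrArg Prod.fst h)
        have hpos := hpd _ hmem hne0
        have hform : hrForm 𝔥 r₀ r (z, (0 : ∀ j, 𝔥 j)) (z, (0 : ∀ j, 𝔥 j)) = r₀ * ⟪z, z⟫ := by
          simp [hrForm]
        rw [hform] at hpos
        have hzz : 0 < ⟪z, z⟫ := inner_self_pos' hzne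
        nlinarith
      refine ⟨hr₀, fun j => ?_⟩
      by_contra hcon
      push_neg at hcon
      obtain ⟨hj1, hj2⟩ := hcon  -- r j ≤ 0, -r₀ ≤ r j
      obtain ⟨e, he, hene⟩ := (Submodule.ne_bot_iff _).1 (h_ne j)
      have hee : 0 < ⟪e, e⟫ := inner_self_pos' hene
      rcases eq_or_lt_of_le hj1 with hj0 | hjneg
      · -- r j = 0
        set u : ∀ k, 𝔥 k := Pi.single j ⟨e, he⟩ with hu
        have hmem : ((0 : V), u) ∈ diagHPerp 𝔥 r₀ r := by
          rw [mem_perp_iff]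
          intro k v hv
          rcases eq_or_ne k j with rfl | hk
          · show r₀ * ⟪(0 : V), v⟫ + r k * ⟪(u k : V), v⟫ = 0
            simp [hj0]
          · show r₀ * ⟪(0 : V), v⟫ + r k * ⟪(u k : V), v⟫ = 0
            simp [hu, Pi.single_eq_of_ne hk]
        have hne0 : ((0 : V), u) ≠ 0 := by
          intro h
          have h2 : u j = (0 : 𝔥 j) := congrFun (congrArg Prod.snd h) j
          have h3 : u j = ⟨e, he⟩ := by simp [hu]
          rw [h3] at h2
          exact hene (by simpa [Subtype.ext_iff] using h2)
        have hpos := hpd _ hmem hne0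
        have hform : hrForm 𝔥 r₀ r ((0 : V), u) ((0 : V), u) = r j * ⟪e, e⟫ := by
          rw [hrForm]
          simp only [inner_zero_left, mul_zero, zero_add]
          rw [Finset.sum_eq_single j]
          · simp [hu]
          · intro k _ hk; simp [hu, Pi.single_eq_of_ne hk]
          · simp
        rw [hform, hj0] at hpos
        simp at hpos
      · -- r j < 0
        have hrne : r j ≠ 0 := ne_of_lt hjneg
        set c : ℝ := -(r₀ / r j) with hc
        set u : ∀ k, 𝔥 k := Pi.single j ⟨c • e, Submodule.smul_mem _ c he⟩ with hu
        have hmem : (e, u) ∈ diagHPerp 𝔥 r₀ r := by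
          rw [mem_perp_iff]
          intro k v hv
          rcases eq_or_ne k j with rfl | hk
          · show r₀ * ⟪e, v⟫ + r k * ⟪(u k : V), v⟫ = 0
            have h3 : (u k : V) = c • e := by simp [hu]
            rw [h3, real_inner_smul_left, hc]
            field_simp
            ring
          · show r₀ * ⟪e, v⟫ + r k * ⟪(u k : V), v⟫ = 0
            have h3 : (u k : V) = 0 := by simp [hu, Pi.single_eq_of_ne hk]
            rw [h3]
            simp [h_orth j k (Ne.symm hk) e he v hv]
        have hne0 : (e, u) ≠ 0 := fun h => hene (congrArg Prod.fst h)
        have hpos := hpd _ hmem hne0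
        have hform : hrForm 𝔥 r₀ r (e, u) (e, u) = r₀ * ⟪e, e⟫ + r j * (c * (c * ⟪e, e⟫)) := by
          rw [hrForm]
          congr 1
          rw [Finset.sum_eq_single j]
          · simp [hu, real_inner_smul_left, real_inner_smul_right]
            left; rw [norm_smul, mul_pow, Real.norm_eq_abs, sq_abs]; ring
          · intro k _ hk; simp [hu, Pi.single_eq_of_ne hk]
          · simp
        rw [hform] at hpos
        have hkey : r j * (c * (c * ⟪e, e⟫)) = (r₀ ^ 2 / r j) * ⟪e, e⟫ := by
          rw [hc]; field_simp
        rw [hkey] at hpos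
        have h2 : r₀ + r₀ ^ 2 / r j ≤ 0 := by
          rw [show r₀ + r₀ ^ 2 / r j = (r₀ * (r j + r₀)) / r j by field_simp]
          apply div_nonpos_of_nonneg_of_nonpos
          · nlinarith
          · exact hjneg.le
        nlinarith
    · rintro ⟨hr₀, hcond⟩ w hw hwne
      obtain ⟨x, u⟩ := w
      rw [mem_perp_iff] at hw
      have hrne : ∀ j, r j ≠ 0 := by
        intro j
        rcases hcond j with h | h
        · exact ne_of_gt h
        · exact ne_of_lt (by linarith)
      set P : Fin s → V := fun j => (Submodule.orthogonalProjectionOnto (𝔥 j) x : V) with hPdef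
      have hPmem : ∀ j, P j ∈ 𝔥 j := fun j => (Submodule.orthogonalProjectionOnto (𝔥 j) x).2
      have hxP : ∀ j, ∀ v ∈ 𝔥 j, ⟪x, v⟫ = ⟪P j, v⟫ := by
        intro j v hv
        have h1 := Submodule.starProjection_inner_eq_zero (K := 𝔥 j) x v hv
        rw [inner_sub_left] at h1
        have : ⟪x, v⟫ - ⟪P j, v⟫ = 0 := h1
        linarith
      have hz : ∀ j, r₀ • P j + r j • (u j : V) = 0 := by
        intro j
        set z : V := r₀ • P j + r j • (u j : V) with hzdef
        have hzmem : z ∈ 𝔥 j :=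
          Submodule.add_mem _ (Submodule.smul_mem _ _ (hPmem j)) (Submodule.smul_mem _ _ (u j).2)
        have hzv : ∀ v ∈ 𝔥 j, ⟪z, v⟫ = 0 := by
          intro v hv
          have h1 := hw j v hv
          rw [hzdef, inner_add_left, real_inner_smul_left, real_inner_smul_left, ← hxP j v hv]
          linarith
        exact inner_self_eq_zero.1 (hzv z hzmem)
      have hu : ∀ j, (u j : V) = (-(r₀ / r j)) • P j := by
        intro j
        have h2 : r j • (u j : V) = (-r₀) • P j := by
          rw [neg_smul]
          exact eq_neg_of_add_eq_zero_right (hz j)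
        calc (u j : V) = (r j)⁻¹ • (r j • (u j : V)) := by
              rw [smul_smul, inv_mul_cancel₀ (hrne j), one_smul]
          _ = (r j)⁻¹ • ((-r₀) • P j) := by rw [h2]
          _ = (-(r₀ / r j)) • P j := by
              rw [smul_smul]
              congr 1
              field_simp
      have hterm : ∀ j, r j * ⟪(u j : V), (u j : V)⟫ = (r₀ ^ 2 / r j) * ⟪P j, P j⟫ := by
        intro j
        rw [hu j, real_inner_smul_left, real_inner_smul_right]
        field_simp [hrne j]
      have hform : hrForm 𝔥 r₀ r (x, u) (x, u)
          = r₀ * ⟪x, x⟫ + ∑ j, (r₀ ^ 2 / r j) * ⟪P j, P j⟫ := by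
        simp only [hrForm]
        congr 1
        exact Finset.sum_congr rfl fun j _ => hterm j
      set S := ∑ j, ⟪P j, P j⟫ with hS
      have hxy : ⟪x, ∑ j, P j⟫ = S := by
        rw [inner_sum]
        exact Finset.sum_congr rfl fun j _ => hxP j (P j) (hPmem j)
      have hyy : ⟪(∑ j, P j : V), (∑ j, P j : V)⟫ = S := by
        rw [sum_inner]
        refine Finset.sum_congr rfl fun j _ => ?_
        rw [inner_sum, Finset.sum_eq_single j]
        · intro k _ hk
          exact h_orth j k (Ne.symm hk) _ (hPmem j) _ (hPmem k)
        · simp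
      have hbessel : S ≤ ⟪x, x⟫ := by
        have h0 : (0:ℝ) ≤ ⟪x - ∑ j, P j, x - ∑ j, P j⟫ := real_inner_self_nonneg
        simp only [inner_sub_left, inner_sub_right] at h0
        have hcomm : ⟪(∑ j, P j : V), x⟫ = S := by rw [real_inner_comm]; exact hxy
        rw [hcomm, hyy] at h0
        linarith
      have hcoef : ∀ j, 0 < r₀ + r₀ ^ 2 / r j := by
        intro j
        rcases hcond j with h | h
        · have := div_nonneg (sq_nonneg r₀) h.le
          linarith
        · have h1 : r j < 0 := by linarith
          rw [show r₀ + r₀ ^ 2 / r j = (r₀ * (r j + r₀)) / r j by field_simp [hrne j]]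
          exact div_pos_of_neg_of_neg (by nlinarith) h1
      rw [hform]
      by_cases hall : ∀ j, P j = 0
      · have hx0 : x ≠ 0 := by
          intro h
          apply hwne
          have hu0 : ∀ j, u j = 0 := fun j => Subtype.ext (by rw [hu j, hall j, smul_zero]; simp)
          simp only [Prod.mk_eq_zero]
          exact ⟨h, funext hu0⟩
        have hsum0 : ∑ j, (r₀ ^ 2 / r j) * ⟪P j, P j⟫ = 0 :=
          Finset.sum_eq_zero fun j _ => by simp [hall j]
        rw [hsum0, add_zero]
        exact mul_pos hr₀ (inner_self_pos' hx0)
      · push_neg at hall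
        obtain ⟨j₀, hj₀⟩ := hall
        have hsplit : ∑ j, (r₀ + r₀ ^ 2 / r j) * ⟪P j, P j⟫
            = r₀ * S + ∑ j, (r₀ ^ 2 / r j) * ⟪P j, P j⟫ := by
          rw [hS, Finset.mul_sum, ← Finset.sum_add_distrib]
          exact Finset.sum_congr rfl fun j _ => by ring
        have hA : 0 < ∑ j, (r₀ + r₀ ^ 2 / r j) * ⟪P j, P j⟫ := by
          apply Finset.sum_pos'
          · exact fun j _ => mul_nonneg (hcoef j).le real_inner_self_nonneg
          · exact ⟨j₀, Finset.mem_univ j₀, mul_pos (hcoef j₀) (inner_self_pos' hj₀)⟩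
        nlinarith
end

section
/- For all integers a₁, a₂, the set {(m₁,m₂,m₃) ∈ ℕ₀³ : a₁ = 3(m₁+m₂) and a₂ = m₃ − m₁ − 2m₂} is finite, and its cardinality ℘(a₁,a₂) equals 0 if a₁ < 0 or 3 does not divide a₁, and equals max(0, a₁/3 + 1 + min(0, a₂ + a₁/3)) if a₁ ≥ 0 and 3 divides a₁. -/
/-- The set of triples `(m₁,m₂,m₃) ∈ ℕ₀³` with `a₁ = 3(m₁+m₂)` and `a₂ = m₃ − m₁ − 2m₂`. -/
def partitionSet (a₁ a₂ : ℤ) : Set (ℕ × ℕ × ℕ) :=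
  {m | a₁ = 3 * ((m.1 : ℤ) + (m.2.1 : ℤ)) ∧ a₂ = (m.2.2 : ℤ) - (m.1 : ℤ) - 2 * (m.2.1 : ℤ)}

/-!
There are no solutions unless `a₁ = 3c`, and then a solution is determined by `m₁`:
necessarily `m₂ = c - m₁` and `m₃ = a₂ + 2c - m₁`, so the admissible `m₁` are exactly
`0 ≤ m₁ ≤ min(c, a₂ + 2c)`, and there are `max(0, min(c + 1, a₂ + 2c + 1))` of them.
-/

lemma partitionSet_eq_empty_of_not_dvd {a₁ : ℤ} (a₂ : ℤ) (h : ¬3 ∣ a₁) :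
    partitionSet a₁ a₂ = ∅ :=
  Set.eq_empty_of_forall_notMem fun _ ⟨h₁, _⟩ => h ⟨_, h₁⟩

lemma injOn_fst_partitionSet (a₁ a₂ : ℤ) : Set.InjOn Prod.fst (partitionSet a₁ a₂) := by
  rintro ⟨i, m₂, m₃⟩ ⟨h₁, h₂⟩ ⟨j, n₂, n₃⟩ ⟨h₁', h₂'⟩ (rfl : i = j)
  dsimp only at h₁ h₂ h₁' h₂'
  simp only [Prod.mk.injEq, true_and]
  omega

lemma fst_image_partitionSet_three_mul (c a₂ : ℤ) :
    Prod.fst '' partitionSet (3 * c) a₂ = Set.Iio (min (c + 1) (a₂ + 2 * c + 1)).toNat := by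
  ext i
  simp only [partitionSet, Set.mem_image, Set.mem_Iio, Set.mem_ofPred_eq, Prod.exists,
    exists_and_right, exists_eq_right]
  constructor
  · rintro ⟨m₂, m₃, h₁, h₂⟩
    omega
  · intro hi
    exact ⟨c.toNat - i, (a₂ + 2 * c - i).toNat, by omega, by omega⟩

lemma partitionSet_three_mul_finite_and_ncard (c a₂ : ℤ) :
    (partitionSet (3 * c) a₂).Finite ∧
      (partitionSet (3 * c) a₂).ncard = (min (c + 1) (a₂ + 2 * c + 1)).toNat := by
  have himage := fst_image_partitionSet_three_mul c a₂
  have hinj := injOn_fst_partitionSet (3 * c) a₂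
  refine ⟨.of_finite_image (himage ▸ Set.finite_Iio _) hinj, ?_⟩
  rw [← hinj.ncard_image, himage, Set.ncard_Iio_nat]

/-- **Formula for the partition function ℘.**
For all integers `a₁, a₂` the set of triples `(m₁,m₂,m₃) ∈ ℕ₀³` with `a₁ = 3(m₁+m₂)` and
`a₂ = m₃ − m₁ − 2m₂` is finite; its cardinality `℘(a₁,a₂)` is `0` if `a₁ < 0` or `3 ∤ a₁`,
and equals `max(0, a₁/3 + 1 + min(0, a₂ + a₁/3))` if `a₁ ≥ 0` and `3 ∣ a₁`. -/
theorem partitionSet_finite_and_card (a₁ a₂ : ℤ) :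
    (partitionSet a₁ a₂).Finite ∧
    ((a₁ < 0 ∨ ¬ (3 ∣ a₁)) → (partitionSet a₁ a₂).ncard = 0) ∧
    (0 ≤ a₁ → 3 ∣ a₁ →
      ((partitionSet a₁ a₂).ncard : ℤ) = max 0 (a₁ / 3 + 1 + min 0 (a₂ + a₁ / 3))) := by
  by_cases h : 3 ∣ a₁
  · obtain ⟨c, rfl⟩ := h
    obtain ⟨hfin, hcard⟩ := partitionSet_three_mul_finite_and_ncard c a₂
    refine ⟨hfin, fun _ => ?_, fun _ _ => ?_⟩ <;> rw [hcard] <;> omega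
  · rw [partitionSet_eq_empty_of_not_dvd a₂ h]
    exact ⟨Set.finite_empty, fun _ => Set.ncard_empty _, fun _ h₃ => absurd h₃ h⟩
end

section
/- For all nonnegative integers z₂ and z₃: M(2z₂, z₂, z₃) = 1 if z₃ ≤ z₂, and M(2z₂, z₂, z₃) = 0 if z₃ > z₂. -/
/-- The partition function `℘(a₁,a₂)`: the number of triples `(m₁,m₂,m₃) ∈ ℕ₀³` with
`a₁ = 3(m₁+m₂)` and `a₂ = m₃ − m₁ − 2m₂`. -/
noncomputable def wp (a₁ a₂ : ℤ) : ℕ :=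
  Set.ncard {m : ℕ × ℕ × ℕ |
    a₁ = 3 * ((m.1 : ℤ) + (m.2.1 : ℤ)) ∧ a₂ = (m.2.2 : ℤ) - (m.1 : ℤ) - 2 * (m.2.1 : ℤ)}

/-- The branching multiplicity `m(z₁,z₂,z₃)` of the trivial `U•(2)`-representation in the
irreducible `SU(3)×SO(3)`-representation of highest weight `z₁λ₁+z₂λ₂+z₃μ₁`, expressed
as a seven-term alternating sum of partition function values. -/
noncomputable def branchM (z₁ z₂ z₃ : ℕ) : ℤ :=
  (wp ((z₁ : ℤ) + z₂) (-(z₃ : ℤ) - z₁ - 2) : ℤ)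
  + (wp ((z₁ : ℤ) + z₂) ((z₃ : ℤ) - z₂) : ℤ)
  - (wp ((z₁ : ℤ) + z₂) (-(z₃ : ℤ) - z₂ - 1) : ℤ)
  - (wp ((z₁ : ℤ) + z₂) ((z₃ : ℤ) - z₁ - 1) : ℤ)
  + (wp ((z₁ : ℤ) - 2 * z₂ - 3) ((z₂ : ℤ) + 1 - z₃) : ℤ)
  + (wp ((z₁ : ℤ) - 2 * z₂ - 3) ((z₂ : ℤ) - z₁ + z₃) : ℤ)
  - (wp ((z₁ : ℤ) - 2 * z₂ - 3) ((z₂ : ℤ) + 2 + z₃) : ℤ)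

/-!
For `z₁ = 2z₂` the last three terms of `M` have first argument `−3` and vanish. In the first
four, `℘(3s, a)` counts the choices of `m₁` with `0 ≤ m₁ ≤ min(s, a + 2s)`, since `m₁`
determines `m₂ = s − m₁` and `m₃ = a + 2s − m₁`. What remains is an identity between
piecewise-linear functions of `z₂, z₃`.
-/

theorem wp_eq_zero_of_neg {a₁ : ℤ} (h : a₁ < 0) (a₂ : ℤ) : wp a₁ a₂ = 0 := by
  rw [wp]
  convert Set.ncard_empty (ℕ × ℕ × ℕ)
  refine Set.eq_empty_of_forall_notMem fun m hm => ?_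
  obtain ⟨h₁, -⟩ := hm
  omega

theorem wp_three_mul (s : ℕ) (a₂ : ℤ) :
    wp (3 * s) a₂ = (min (s : ℤ) (a₂ + 2 * s) + 1).toNat := by
  have hset : {m : ℕ × ℕ × ℕ |
      (3 * s : ℤ) = 3 * ((m.1 : ℤ) + m.2.1) ∧ a₂ = (m.2.2 : ℤ) - m.1 - 2 * m.2.1}
      = (Finset.range (min (s : ℤ) (a₂ + 2 * s) + 1).toNat).image
          (fun m₁ => (m₁, s - m₁, (a₂ + 2 * s - m₁).toNat)) := by
    ext ⟨m₁, m₂, m₃⟩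
    simp only [Set.mem_ofPred_eq, Finset.coe_image, Set.mem_image, Finset.mem_coe,
      Finset.mem_range, Prod.mk.injEq]
    constructor
    · rintro ⟨h₁, h₂⟩
      exact ⟨m₁, by omega, rfl, by omega, by omega⟩
    · rintro ⟨m₁, hm₁, rfl, rfl, rfl⟩
      omega
  have hinj : Function.Injective (fun m₁ : ℕ => (m₁, s - m₁, (a₂ + 2 * s - m₁).toNat)) :=
    fun _ _ h => congrArg Prod.fst h
  rw [wp, hset, Set.ncard_coe_finset, Finset.card_image_of_injective _ hinj, Finset.card_range]

/-- **Multiplicity of the representations `ϱ(2z₂, z₂, z₃)`.**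
For all nonnegative integers `z₂` and `z₃`: `m(2z₂, z₂, z₃) = 1` if `z₃ ≤ z₂`,
and `m(2z₂, z₂, z₃) = 0` if `z₃ > z₂`. -/
theorem branchM_two_z₂ (z₂ z₃ : ℕ) :
    (z₃ ≤ z₂ → branchM (2 * z₂) z₂ z₃ = 1) ∧ (z₂ < z₃ → branchM (2 * z₂) z₂ z₃ = 0) := by
  have hfirst : ((2 * z₂ : ℕ) : ℤ) + z₂ = 3 * z₂ := by push_cast; ring
  have hsecond : ((2 * z₂ : ℕ) : ℤ) - 2 * z₂ - 3 = -3 := by push_cast; ring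
  simp only [branchM, hfirst, hsecond, wp_eq_zero_of_neg (by norm_num : (-3 : ℤ) < 0),
    wp_three_mul]
  push_cast
  omega
end

section
/- For all nonnegative integers z₁ ≥ z₂ and z₃: if 2z₁ − z₂ < 3z₃ or z₁ + z₂ < 3z₃, then M(z₁,z₂,z₃) = 0. -/
lemma wp_three_mul_s8 (n : ℕ) (b : ℤ) : wp (3 * n) b = n + 1 - (-b - n).toNat := by
  have hset : {m : ℕ × ℕ × ℕ | (3 * n : ℤ) = 3 * ((m.1 : ℤ) + m.2.1) ∧
      b = (m.2.2 : ℤ) - m.1 - 2 * m.2.1} =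
      (fun k ↦ (n - k, k, (b + n + k).toNat)) '' Set.Icc (-b - n).toNat n := by
    ext ⟨m₁, m₂, m₃⟩
    simp only [Set.mem_ofPred_eq, Set.mem_image, Set.mem_Icc, Prod.mk.injEq]
    constructor
    · rintro ⟨h₁, h₂⟩
      exact ⟨m₂, ⟨by omega, by omega⟩, by omega, rfl, by omega⟩
    · rintro ⟨k, ⟨hk₁, hk₂⟩, rfl, rfl, rfl⟩
      omega
  have hinj : Function.Injective fun k : ℕ ↦ (n - k, k, (b + n + k).toNat) :=
    fun k l h ↦ congrArg (·.2.1) h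
  rw [wp, hset, Set.ncard_image_of_injective _ hinj, Set.ncard_eq_toFinset_card',
    Set.toFinset_Icc, Nat.card_Icc]

lemma wp_eq_zero {a : ℤ} (b : ℤ) (ha : ¬ (3 ∣ a ∧ 0 ≤ a)) : wp a b = 0 := by
  rw [wp, ← Set.ncard_empty (ℕ × ℕ × ℕ)]
  congr
  refine Set.eq_empty_of_forall_notMem fun m ⟨hm, _⟩ ↦ ha ⟨⟨_, hm⟩, ?_⟩
  omega

lemma wp_eq (a b : ℤ) : (wp a b : ℤ) =
    if 3 ∣ a ∧ 0 ≤ a then min (a / 3 + 1) (max 0 (b + 2 * (a / 3) + 1)) else 0 := by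
  split_ifs with ha
  · obtain ⟨⟨c, rfl⟩, hc⟩ := ha
    lift c to ℕ using by omega
    rw [wp_three_mul_s8]
    omega
  · exact_mod_cast wp_eq_zero b ha

/-- **Vanishing of the branching multiplicity below the `z₃`-cone.**
For all nonnegative integers `z₁ ≥ z₂` and `z₃`: if `2z₁ − z₂ < 3z₃` or `z₁ + z₂ < 3z₃`,
then `m(z₁,z₂,z₃) = 0`. -/
theorem branchM_vanishes (z₁ z₂ z₃ : ℕ) (hz : z₂ ≤ z₁)
    (h : 2 * (z₁ : ℤ) - z₂ < 3 * z₃ ∨ (z₁ : ℤ) + z₂ < 3 * z₃) :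
    branchM z₁ z₂ z₃ = 0 := by
  simp only [branchM, wp_eq]
  split_ifs <;> omega
end

section
/- For all real t₀ > 0, t₁ > 0 and all nonnegative integers z₁ ≥ z₂, z₃ with (z₁,z₂,z₃) ≠ (0,0,0) and M(z₁,z₂,z₃) > 0, one has η(z₁,z₂,z₃;t₀,t₁) ≥ min(12/t₀, 4/t₀ + 8/t₁). Moreover M(2,1,0) = 1 with η(2,1,0;t₀,t₁) = 12/t₀ and M(2,1,1) = 1 with η(2,1,1;t₀,t₁) = 4/t₀ + 8/t₁; consequently the smallest value of η over all such triples equals 4/t₀ + 8/t₁ if t₁ ≥ t₀ and equals 12/t₀ if t₁ ≤ t₀. -/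
/-- The Laplace eigenvalue `η(z₁,z₂,z₃;t₀,t₁)` of the metric `g_{t₀,t₁}` on the
Aloff–Wallach manifold `W^{1,1}` associated with the representation `ϱ(z₁,z₂,z₃)`. -/
noncomputable def eta (z₁ z₂ z₃ : ℕ) (t₀ t₁ : ℝ) : ℝ :=
  (4 * ((z₁ : ℝ) ^ 2 + (z₂ : ℝ) ^ 2 - (z₁ : ℝ) * ((z₂ : ℝ) - 3)) / 3
      - 4 * (z₃ : ℝ) * ((z₃ : ℝ) + 1)) / t₀
    + 4 * (z₃ : ℝ) * ((z₃ : ℝ) + 1) / t₁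


/-!
`℘(a₁, ·)` vanishes unless `a₁ = 3k` with `k ≥ 0`, and `℘(3k, a) = max 0 (min (k+1) (a+2k+1))`
is piecewise linear in `a`. Hence `m(z₁,z₂,z₃) > 0` forces `z₁ + z₂ = 3k` together with
`z₃ ≤ k ≤ z₂ + z₃ ≤ 2k` and `z₂ ≤ k + z₃`, where `k ≥ 1` for a nonzero triple. On this region
`z₃ = 0` forces `(z₁,z₂) = (2k,k)`, so `η ≥ 12/t₀`; for `z₃ ≥ 1` the coefficient of `1/t₀` in `η`
is at least `4` and that of `1/t₁`, namely `4z₃(z₃+1)`, is at least `8`.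
-/

lemma wp_eq_zero_s10 {a₁ : ℤ} (h : ∀ k : ℕ, a₁ ≠ 3 * k) (a₂ : ℤ) : wp a₁ a₂ = 0 := by
  rw [wp, ← Set.ncard_empty (ℕ × ℕ × ℕ)]
  congr 1
  ext ⟨m₁, m₂, m₃⟩
  simp only [Set.mem_ofPred_eq, Set.mem_empty_iff_false, iff_false, not_and]
  intro h₁ _
  exact h (m₁ + m₂) (by push_cast; exact h₁)

/-- The solutions are indexed by `m₂ ∈ [max 0 (-(a+k)), k]`, with `m₁ = k - m₂` and
`m₃ = a + k + m₂`. -/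
lemma wp_three_mul_s10 (k : ℕ) (a : ℤ) :
    (wp (3 * k) a : ℤ) = max 0 (min ((k : ℤ) + 1) (a + 2 * k + 1)) := by
  have hsol : {m : ℕ × ℕ × ℕ |
      3 * (k : ℤ) = 3 * ((m.1 : ℤ) + m.2.1) ∧ a = (m.2.2 : ℤ) - m.1 - 2 * m.2.1}
      = (Finset.Ico (-(a + k)).toNat (k + 1)).image
          (fun m₂ => (k - m₂, m₂, (a + k + m₂).toNat)) := by
    ext ⟨m₁, m₂, m₃⟩
    simp only [Set.mem_ofPred_eq, Finset.coe_image, Set.mem_image, Finset.mem_coe,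
      Finset.mem_Ico, Prod.mk.injEq]
    constructor
    · rintro ⟨h₁, h₂⟩
      exact ⟨m₂, by omega, by omega, rfl, by omega⟩
    · rintro ⟨m₂, hm₂, rfl, rfl, rfl⟩
      omega
  rw [wp, hsol, Set.ncard_coe_finset, Finset.card_image_of_injective, Nat.card_Ico]
  · omega
  · intro x y h
    simpa using congrArg (fun m => m.2.1) h

lemma branchM_eq_zero_of_not_dvd {z₁ z₂ : ℕ} (h : ¬ 3 ∣ z₁ + z₂) (z₃ : ℕ) :
    branchM z₁ z₂ z₃ = 0 := by
  have h₁ : ∀ a, wp ((z₁ : ℤ) + z₂) a = 0 :=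
    wp_eq_zero_s10 fun k hk => h ⟨k, by omega⟩
  have h₂ : ∀ a, wp ((z₁ : ℤ) - 2 * z₂ - 3) a = 0 :=
    wp_eq_zero_s10 fun k hk => h ⟨k + z₂ + 1, by omega⟩
  simp [branchM, h₁, h₂]

lemma bounds_of_branchM_pos {z₁ z₂ z₃ k : ℕ} (hsum : z₁ + z₂ = 3 * k)
    (h : 0 < branchM z₁ z₂ z₃) :
    z₃ ≤ k ∧ z₂ + z₃ ≤ 2 * k ∧ k ≤ z₂ + z₃ ∧ z₂ ≤ k + z₃ := by
  have hsum' : (z₁ : ℤ) + z₂ = 3 * k := by exact_mod_cast hsum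
  unfold branchM at h
  rw [hsum', wp_three_mul_s10, wp_three_mul_s10, wp_three_mul_s10, wp_three_mul_s10] at h
  by_cases hz₂ : z₂ < k
  · have hd : (z₁ : ℤ) - 2 * z₂ - 3 = 3 * ((k - z₂ - 1 : ℕ) : ℤ) := by omega
    rw [hd, wp_three_mul_s10, wp_three_mul_s10, wp_three_mul_s10] at h
    omega
  · have h₀ : ∀ a, wp ((z₁ : ℤ) - 2 * z₂ - 3) a = 0 := wp_eq_zero_s10 fun _ _ => by omega
    rw [h₀, h₀, h₀] at h
    omega

lemma branchM_two_one {z₃ : ℕ} (hz₃ : z₃ ≤ 1) : branchM 2 1 z₃ = 1 := by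
  have h₀ : ∀ a, wp ((2 : ℕ) - 2 * (1 : ℕ) - 3 : ℤ) a = 0 := wp_eq_zero_s10 fun _ _ => by omega
  have h₃ : ((2 : ℕ) : ℤ) + (1 : ℕ) = 3 * (1 : ℕ) := by norm_num
  unfold branchM
  rw [h₀, h₀, h₀, h₃, wp_three_mul_s10, wp_three_mul_s10, wp_three_mul_s10, wp_three_mul_s10]
  omega

/-- `Q - 3z₃² - 3z₃ - 3 = 3(2k - z₂ - z₃)(k - z₂ + z₃) + 3k(k - z₃) + 3(3k - z₂ - z₃ - 1)`
for `Q = z₁² + z₂² - z₁(z₂ - 3)` and `z₁ = 3k - z₂`, and each term is nonnegative. -/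
lemma quadratic_lower_bound {z₁ z₂ z₃ k : ℝ} (hk : 1 ≤ k) (hsum : z₁ + z₂ = 3 * k)
    (h₁ : z₃ ≤ k) (h₂ : z₂ + z₃ ≤ 2 * k) (h₃ : z₂ ≤ k + z₃) :
    3 * z₃ ^ 2 + 3 * z₃ + 3 ≤ z₁ ^ 2 + z₂ ^ 2 - z₁ * (z₂ - 3) := by
  nlinarith [mul_nonneg (by linarith : (0 : ℝ) ≤ k) (by linarith : 0 ≤ k - z₃),
    mul_nonneg (by linarith : 0 ≤ 2 * k - z₂ - z₃) (by linarith : 0 ≤ k - z₂ + z₃)]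

lemma twelve_div_le_eta {k : ℕ} (hk : 1 ≤ k) {t₀ : ℝ} (ht₀ : 0 < t₀) (t₁ : ℝ) :
    12 / t₀ ≤ eta (2 * k) k 0 t₀ t₁ := by
  have hk' : (1 : ℝ) ≤ k := by exact_mod_cast hk
  unfold eta
  push_cast
  rw [mul_zero, zero_mul, sub_zero, zero_div, add_zero]
  gcongr
  nlinarith

lemma four_div_add_eight_div_le_eta {z₁ z₂ z₃ : ℕ} (hz₃ : 1 ≤ z₃)
    (hQ : 3 * (z₃ : ℝ) ^ 2 + 3 * z₃ + 3 ≤ (z₁ : ℝ) ^ 2 + (z₂ : ℝ) ^ 2 - z₁ * ((z₂ : ℝ) - 3))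
    {t₀ t₁ : ℝ} (ht₀ : 0 < t₀) (ht₁ : 0 < t₁) :
    4 / t₀ + 8 / t₁ ≤ eta z₁ z₂ z₃ t₀ t₁ := by
  have hz₃' : (1 : ℝ) ≤ z₃ := by exact_mod_cast hz₃
  unfold eta
  gcongr
  · linarith
  · nlinarith

lemma min_le_eta_of_branchM_pos {z₁ z₂ z₃ : ℕ} (hne : (z₁, z₂, z₃) ≠ (0, 0, 0))
    (h : 0 < branchM z₁ z₂ z₃) {t₀ t₁ : ℝ} (ht₀ : 0 < t₀) (ht₁ : 0 < t₁) :
    min (12 / t₀) (4 / t₀ + 8 / t₁) ≤ eta z₁ z₂ z₃ t₀ t₁ := by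
  obtain ⟨k, hsum⟩ : 3 ∣ z₁ + z₂ := by
    by_contra hdvd
    exact h.ne' (branchM_eq_zero_of_not_dvd hdvd z₃)
  obtain ⟨h₁, h₂, h₃, h₄⟩ := bounds_of_branchM_pos hsum h
  have hk : 1 ≤ k := by
    by_contra hk
    exact hne (by simp only [Prod.mk.injEq]; omega)
  rcases Nat.eq_zero_or_pos z₃ with rfl | hz₃
  · obtain ⟨rfl, rfl⟩ : z₂ = k ∧ z₁ = 2 * k := by omega
    exact min_le_of_left_le (twelve_div_le_eta hk ht₀ t₁)
  · refine min_le_of_right_le (four_div_add_eight_div_le_eta hz₃ ?_ ht₀ ht₁)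
    apply quadratic_lower_bound (k := k) <;> norm_cast

/-- **The first nonzero eigenvalue of `(W^{1,1}, g_{t₀,t₁})`.**
For `t₀, t₁ > 0`, every eigenvalue `η(z₁,z₂,z₃;t₀,t₁)` with `z₁ ≥ z₂`,
`(z₁,z₂,z₃) ≠ (0,0,0)` and `m(z₁,z₂,z₃) > 0` is at least `min(12/t₀, 4/t₀ + 8/t₁)`.
Moreover `m(2,1,0) = 1` with `η(2,1,0) = 12/t₀` and `m(2,1,1) = 1` with
`η(2,1,1) = 4/t₀ + 8/t₁`; consequently the smallest eigenvalue over all such triples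
equals `4/t₀ + 8/t₁` if `t₁ ≥ t₀` and `12/t₀` if `t₁ ≤ t₀`. -/
theorem first_eigenvalue_AloffWallach (t₀ t₁ : ℝ) (ht₀ : 0 < t₀) (ht₁ : 0 < t₁) :
    (∀ z₁ z₂ z₃ : ℕ, z₂ ≤ z₁ → (z₁, z₂, z₃) ≠ (0, 0, 0) → 0 < branchM z₁ z₂ z₃ →
      min (12 / t₀) (4 / t₀ + 8 / t₁) ≤ eta z₁ z₂ z₃ t₀ t₁) ∧
    branchM 2 1 0 = 1 ∧ eta 2 1 0 t₀ t₁ = 12 / t₀ ∧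
    branchM 2 1 1 = 1 ∧ eta 2 1 1 t₀ t₁ = 4 / t₀ + 8 / t₁ ∧
    (t₀ ≤ t₁ →
      IsLeast {x : ℝ | ∃ z₁ z₂ z₃ : ℕ, z₂ ≤ z₁ ∧ (z₁, z₂, z₃) ≠ (0, 0, 0) ∧
        0 < branchM z₁ z₂ z₃ ∧ x = eta z₁ z₂ z₃ t₀ t₁} (4 / t₀ + 8 / t₁)) ∧
    (t₁ ≤ t₀ →
      IsLeast {x : ℝ | ∃ z₁ z₂ z₃ : ℕ, z₂ ≤ z₁ ∧ (z₁, z₂, z₃) ≠ (0, 0, 0) ∧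
        0 < branchM z₁ z₂ z₃ ∧ x = eta z₁ z₂ z₃ t₀ t₁} (12 / t₀)) := by
  have m₀ : branchM 2 1 0 = 1 := branchM_two_one zero_le_one
  have m₁ : branchM 2 1 1 = 1 := branchM_two_one le_rfl
  have e₀ : eta 2 1 0 t₀ t₁ = 12 / t₀ := by norm_num [eta]
  have e₁ : eta 2 1 1 t₀ t₁ = 4 / t₀ + 8 / t₁ := by norm_num [eta]
  have hleast : IsLeast {x : ℝ | ∃ z₁ z₂ z₃ : ℕ, z₂ ≤ z₁ ∧ (z₁, z₂, z₃) ≠ (0, 0, 0) ∧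
      0 < branchM z₁ z₂ z₃ ∧ x = eta z₁ z₂ z₃ t₀ t₁} (min (12 / t₀) (4 / t₀ + 8 / t₁)) := by
    refine ⟨min_rec' _ ⟨2, 1, 0, by norm_num, by simp, by simp [m₀], e₀.symm⟩
      ⟨2, 1, 1, by norm_num, by simp, by simp [m₁], e₁.symm⟩, ?_⟩
    rintro _ ⟨z₁, z₂, z₃, -, hne, h, rfl⟩
    exact min_le_eta_of_branchM_pos hne h ht₀ ht₁
  have h₁₂ : 12 / t₀ = 4 / t₀ + 8 / t₀ := by ring
  refine ⟨fun _ _ _ _ hne h => min_le_eta_of_branchM_pos hne h ht₀ ht₁,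
    m₀, e₀, m₁, e₁, fun ht => ?_, fun ht => ?_⟩
  · rwa [min_eq_right (by rw [h₁₂]; gcongr)] at hleast
  · rwa [min_eq_left (by rw [h₁₂]; gcongr)] at hleast
end
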